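/- Let G=(V,w,m) be a finite connected weighted graph satisfying CD(K,∞) with K > 0. Then diam_ρ(G) ≤ (2/K)·sup_x √(2 Deg(x)), where diam_ρ is the diameter with respect to the resistance metric ρ. -/

import Mathlib

open scoped ENNReal

structure WGraph (V : Type*) where
  w : V → V → ℝ
  m : V → ℝ
  symm : ∀ x y, w x y = w y x
  nonneg : ∀ x y, 0 ≤ w x y
  loopless : ∀ x, w x x = 0
  mpos : ∀ x, 0 < m x
  locfin : ∀ x, {y | w x y ≠ 0}.Finite

variable {V : Type*}

noncomputable def WGraph.lap (G : WGraph V) (f : V → ℝ) (x : V) : ℝ :=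
  (1 / G.m x) * ∑' y, G.w x y * (f y - f x)

noncomputable def WGraph.gamma (G : WGraph V) (f g : V → ℝ) (x : V) : ℝ :=
  (G.lap (f * g) x - f x * G.lap g x - g x * G.lap f x) / 2

noncomputable def WGraph.gamma2 (G : WGraph V) (f : V → ℝ) (x : V) : ℝ :=
  (G.lap (G.gamma f f) x - 2 * G.gamma f (G.lap f) x) / 2

noncomputable def WGraph.deg (G : WGraph V) (x : V) : ℝ :=
  (∑' y, G.w x y) / G.m x

noncomputable def WGraph.cdist (G : WGraph V) (x y : V) : ℕ∞ :=
  ⨅ (n : ℕ) (_ : ∃ c : ℕ → V, c 0 = x ∧ c n = y ∧ ∀ i < n, 0 < G.w (c i) (c (i+1))), (n : ℕ∞)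

noncomputable def WGraph.rho (G : WGraph V) (x y : V) : ℝ≥0∞ :=
  ⨆ (f : V → ℝ) (_ : ∀ z, G.gamma f f z ≤ 1), ENNReal.ofReal (f y - f x)

noncomputable def WGraph.diamd (G : WGraph V) : ℝ≥0∞ := ⨆ x, ⨆ y, (G.cdist x y : ℝ≥0∞)

noncomputable def WGraph.diamrho (G : WGraph V) : ℝ≥0∞ := ⨆ x, ⨆ y, G.rho x y

def WGraph.Connected (G : WGraph V) : Prop :=
  ∀ x y, ∃ (n : ℕ) (c : ℕ → V), c 0 = x ∧ c n = y ∧ ∀ i < n, 0 < G.w (c i) (c (i+1))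

/-!
Let `P_t = exp(tΔ)` be the heat semigroup. Under `CD(K,∞)` the function `e^{2Kt} Γ(P_t f)` is a
subsolution of the heat equation, so the parabolic maximum principle gives
`Γ(P_t f) ≤ e^{-2Kt}` whenever `Γ f ≤ 1`. By Cauchy–Schwarz `|ΔP_t f| ≤ √(2 Deg) √(Γ(P_t f))`,
so along the flow `f` moves at `x` by at most `∫₀^∞ √(2 Deg x) e^{-Kt} dt = √(2 Deg x) / K`,
while `P_t f` becomes flat along every path as `t → ∞`. Hence
`f y - f x ≤ (√(2 Deg x) + √(2 Deg y)) / K`.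
-/

lemma HasDerivAt.nonneg_of_isMaxOn_Icc {f : ℝ → ℝ} {f' a b : ℝ} (hf : HasDerivAt f f' b)
    (hab : a < b) (hmax : IsMaxOn f (Set.Icc a b) b) : 0 ≤ f' := by
  have hseg : segment ℝ b a ⊆ Set.Icc a b := by
    rw [segment_symm, segment_eq_Icc hab.le]
  have h := hmax.localize.hasFDerivWithinAt_nonpos hf.hasFDerivAt.hasFDerivWithinAt
    (sub_mem_posTangentConeAt_of_segment_subset hseg)
  simp only [ContinuousLinearMap.toSpanSingleton_apply, smul_eq_mul] at h
  exact nonneg_of_mul_nonpos_right h (sub_neg.2 hab)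

namespace WGraph

open Filter Topology

def CD (G : WGraph V) (K : ℝ) : Prop :=
  ∀ (g : V → ℝ) (x : V), K * G.gamma g g x ≤ G.gamma2 g x

variable (G : WGraph V) [Fintype V]

lemma lap_eq_sum (f : V → ℝ) (x : V) :
    G.lap f x = (1 / G.m x) * ∑ y, G.w x y * (f y - f x) := by
  rw [lap, tsum_fintype]

lemma deg_eq_sum (x : V) : G.deg x = (∑ y, G.w x y) / G.m x := by
  rw [deg, tsum_fintype]

lemma gamma_eq_sum (f g : V → ℝ) (x : V) :
    G.gamma f g x = (1 / (2 * G.m x)) * ∑ y, G.w x y * ((f y - f x) * (g y - g x)) := by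
  simp only [gamma, lap_eq_sum, Pi.mul_apply, Finset.mul_sum, ← Finset.sum_sub_distrib,
    Finset.sum_div]
  refine Finset.sum_congr rfl fun y _ => ?_
  field_simp
  ring

lemma gamma_self_eq_sum (f : V → ℝ) (x : V) :
    G.gamma f f x = (1 / (2 * G.m x)) * ∑ y, G.w x y * (f y - f x) ^ 2 := by
  simp only [gamma_eq_sum, sq]

lemma lap_nonpos_of_forall_le {f : V → ℝ} {x : V} (hx : ∀ y, f y ≤ f x) : G.lap f x ≤ 0 := by
  rw [lap_eq_sum]
  exact mul_nonpos_of_nonneg_of_nonpos (one_div_nonneg.2 (G.mpos x).le)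
    (Finset.sum_nonpos fun y _ => mul_nonpos_of_nonneg_of_nonpos (G.nonneg x y)
      (sub_nonpos.2 (hx y)))

lemma w_mul_sq_sub_le_gamma (f : V → ℝ) (x y : V) :
    G.w x y * (f y - f x) ^ 2 ≤ 2 * G.m x * G.gamma f f x := by
  have hm := G.mpos x
  rw [gamma_self_eq_sum, ← mul_assoc, mul_one_div_cancel (by positivity), one_mul]
  exact Finset.single_le_sum (f := fun z => G.w x z * (f z - f x) ^ 2)
    (fun z _ => mul_nonneg (G.nonneg x z) (sq_nonneg _)) (Finset.mem_univ y)

lemma sq_lap_le (f : V → ℝ) (x : V) : G.lap f x ^ 2 ≤ 2 * G.deg x * G.gamma f f x := by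
  have hm := G.mpos x
  have hCS : (∑ y, G.w x y * (f y - f x)) ^ 2
      ≤ (∑ y, G.w x y) * ∑ y, G.w x y * (f y - f x) ^ 2 :=
    Finset.sum_sq_le_sum_mul_sum_of_sq_le_mul _ (fun y _ => G.nonneg x y)
      (fun y _ => mul_nonneg (G.nonneg x y) (sq_nonneg _)) fun y _ => le_of_eq (by ring)
  rw [lap_eq_sum, deg_eq_sum, gamma_self_eq_sum]
  calc (1 / G.m x * ∑ y, G.w x y * (f y - f x)) ^ 2
      ≤ (1 / G.m x) ^ 2 * ((∑ y, G.w x y) * ∑ y, G.w x y * (f y - f x) ^ 2) := by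
        rw [mul_pow]; gcongr
    _ = _ := by field_simp

lemma abs_lap_le (f : V → ℝ) (x : V) :
    |G.lap f x| ≤ √(2 * G.deg x) * √(G.gamma f f x) := by
  have hdeg : 0 ≤ G.deg x := by
    rw [deg_eq_sum]
    exact div_nonneg (Finset.sum_nonneg fun y _ => G.nonneg x y) (G.mpos x).le
  rw [← Real.sqrt_mul (by positivity)]
  exact Real.abs_le_sqrt (G.sq_lap_le f x)

lemma abs_sub_le_of_sqrt_gamma_le {g : V → ℝ} {x y : V} {c : ℝ} (hw : 0 < G.w x y)
    (hg : √(G.gamma g g x) ≤ c) : |g y - g x| ≤ √(2 * G.m x / G.w x y) * c := by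
  have hm := G.mpos x
  calc |g y - g x| = √((g y - g x) ^ 2) := (Real.sqrt_sq_eq_abs _).symm
    _ ≤ √(2 * G.m x / G.w x y * G.gamma g g x) := by
        gcongr
        rw [div_mul_eq_mul_div, le_div_iff₀ hw, mul_comm]
        exact G.w_mul_sq_sub_le_gamma g x y
    _ = √(2 * G.m x / G.w x y) * √(G.gamma g g x) := Real.sqrt_mul (by positivity) _
    _ ≤ √(2 * G.m x / G.w x y) * c := by gcongr

noncomputable def lapLM : (V → ℝ) →ₗ[ℝ] (V → ℝ) where
  toFun := G.lap
  map_add' f g := by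
    ext x
    simp only [Pi.add_apply, lap_eq_sum, ← mul_add, ← Finset.sum_add_distrib]
    congr 1
    exact Finset.sum_congr rfl fun y _ => by ring
  map_smul' c f := by
    ext x
    simp only [Pi.smul_apply, smul_eq_mul, lap_eq_sum, RingHom.id_apply, Finset.mul_sum]
    exact Finset.sum_congr rfl fun y _ => by ring

lemma lap_const_mul (a : ℝ) (g : V → ℝ) (x : V) :
    G.lap (fun z => a * g z) x = a * G.lap g x :=
  congrFun (G.lapLM.map_smul a g) x

noncomputable def heat (f : V → ℝ) (t : ℝ) : V → ℝ :=
  NormedSpace.exp (t • LinearMap.toContinuousLinearMap G.lapLM) f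

lemma heat_zero (f : V → ℝ) : G.heat f 0 = f := by
  simp [heat, NormedSpace.exp_zero]

lemma hasDerivAt_heat (f : V → ℝ) (t : ℝ) (y : V) :
    HasDerivAt (fun s => G.heat f s y) (G.lap (G.heat f t) y) t := by
  have h := (hasDerivAt_exp_smul_const' (𝕂 := ℝ)
    (LinearMap.toContinuousLinearMap G.lapLM) t).clm_apply (hasDerivAt_const t f)
  rw [map_zero, add_zero] at h
  exact hasDerivAt_pi.1 h y

lemma hasDerivAt_gamma_self {g : ℝ → V → ℝ} {g' : V → ℝ} {t : ℝ}
    (hg : ∀ y, HasDerivAt (fun s => g s y) (g' y) t) (x : V) :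
    HasDerivAt (fun s => G.gamma (g s) (g s) x) (2 * G.gamma (g t) g' x) t := by
  simp only [gamma_self_eq_sum]
  refine ((HasDerivAt.fun_sum fun y _ =>
    (((hg y).fun_sub (hg x)).pow 2).const_mul (G.w x y)).const_mul (1 / (2 * G.m x))).congr_deriv ?_
  rw [gamma_eq_sum, Finset.mul_sum, Finset.mul_sum, Finset.mul_sum]
  exact Finset.sum_congr rfl fun y _ => by push_cast; ring

theorem le_of_hasDerivAt_le_lap {u u' : ℝ → V → ℝ}
    (hu : ∀ s z, HasDerivAt (fun s => u s z) (u' s z) s)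
    (hsub : ∀ s > 0, ∀ z, u' s z ≤ G.lap (u s) z) {c : ℝ} (h0 : ∀ z, u 0 z ≤ c)
    {t : ℝ} (ht : 0 ≤ t) (z : V) : u t z ≤ c := by
  suffices key : ∀ ε > 0, u t z ≤ c + ε * t by
    have hlim : Tendsto (fun ε : ℝ => c + ε * t) (𝓝[>] 0) (𝓝 c) := by
      simpa using ((tendsto_id.mul_const t).const_add c).mono_left (nhdsWithin_le_nhds (a := 0))
    exact ge_of_tendsto hlim (eventually_nhdsWithin_of_forall key)
  intro ε hε
  -- the penalty `ε * s` makes `v` a strict subsolution, which cannot peak at a positive time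
  set v : ℝ → V → ℝ := fun s z => u s z - ε * s with hv_def
  have hv : ∀ s z, HasDerivAt (fun s => v s z) (u' s z - ε) s := fun s z => by
    simpa using (hu s z).fun_sub ((hasDerivAt_id s).const_mul ε)
  have hmax_time : ∀ z, ∃ s ∈ Set.Icc 0 t, IsMaxOn (fun s => v s z) (Set.Icc 0 t) s :=
    fun z => isCompact_Icc.exists_isMaxOn (Set.nonempty_Icc.2 ht)
      (fun s _ => (hv s z).continuousAt.continuousWithinAt)
  choose s hs hmax using hmax_time
  obtain ⟨x₀, -, hx₀⟩ := Finset.exists_max_image Finset.univ (fun z => v (s z) z)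
    ⟨z, Finset.mem_univ z⟩
  have hglob : ∀ y, ∀ r ∈ Set.Icc 0 t, v r y ≤ v (s x₀) x₀ :=
    fun y r hr => (hmax y hr).trans (hx₀ y (Finset.mem_univ y))
  have hs₀ : s x₀ = 0 := by
    by_contra hne
    have hpos : 0 < s x₀ := (hs x₀).1.lt_of_ne' hne
    have htime := (hv (s x₀) x₀).nonneg_of_isMaxOn_Icc hpos
      ((hmax x₀).on_subset (Set.Icc_subset_Icc_right (hs x₀).2))
    have hspace := G.lap_nonpos_of_forall_le (f := u (s x₀)) (x := x₀) fun y => by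
      linarith [hglob y _ (hs x₀)]
    linarith [hsub _ hpos x₀]
  calc u t z = v t z + ε * t := by simp [hv_def]
    _ ≤ v (s x₀) x₀ + ε * t := by gcongr; exact hglob z t ⟨ht, le_rfl⟩
    _ = u 0 x₀ + ε * t := by simp [hv_def, hs₀]
    _ ≤ c + ε * t := by linarith [h0 x₀]

variable {G}

lemma Connected.exists_sub_le_mul (hconn : G.Connected) (x y : V) :
    ∃ L : ℝ, ∀ (g : V → ℝ) (c : ℝ), (∀ z, √(G.gamma g g z) ≤ c) → g y - g x ≤ L * c := by
  obtain ⟨n, p, hp0, hpn, hpw⟩ := hconn x y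
  refine ⟨∑ i ∈ Finset.range n, √(2 * G.m (p i) / G.w (p i) (p (i + 1))), fun g c hg => ?_⟩
  rw [← hp0, ← hpn, ← Finset.sum_range_sub (fun i => g (p i)), Finset.sum_mul]
  exact Finset.sum_le_sum fun i hi => (le_abs_self _).trans
    (G.abs_sub_le_of_sqrt_gamma_le (hpw i (Finset.mem_range.1 hi)) (hg _))

/-- Under `CD(K,∞)`, `s ↦ e^{2Ks} Γ(P_s f)` is a subsolution of the heat equation. -/
theorem gamma_heat_le {K : ℝ} (hCD : G.CD K) (f : V → ℝ) {c : ℝ}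
    (hf : ∀ z, G.gamma f f z ≤ c) {t : ℝ} (ht : 0 ≤ t) (x : V) :
    G.gamma (G.heat f t) (G.heat f t) x ≤ Real.exp (-(2 * K * t)) * c := by
  have hexp : ∀ s, HasDerivAt (fun s => Real.exp (2 * K * s)) (Real.exp (2 * K * s) * (2 * K)) s :=
    fun s => by simpa using ((hasDerivAt_id s).const_mul (2 * K)).exp
  have hsub := G.le_of_hasDerivAt_le_lap
    (u := fun s z => Real.exp (2 * K * s) * G.gamma (G.heat f s) (G.heat f s) z)
    (fun s z => (hexp s).mul (G.hasDerivAt_gamma_self (G.hasDerivAt_heat f s) z))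
    (fun s _ z => ?_) (c := c) (fun z => by simpa [heat_zero] using hf z) ht x
  · rwa [Real.exp_neg, ← div_eq_inv_mul, le_div_iff₀ (Real.exp_pos _), mul_comm]
  · have hCDs := mul_le_mul_of_nonneg_left (hCD (G.heat f s) z) (Real.exp_pos (2 * K * s)).le
    rw [gamma2] at hCDs
    rw [lap_const_mul]
    linarith

lemma sqrt_gamma_heat_le {K : ℝ} (hCD : G.CD K) {f : V → ℝ}
    (hf : ∀ z, G.gamma f f z ≤ 1) {t : ℝ} (ht : 0 ≤ t) (x : V) :
    √(G.gamma (G.heat f t) (G.heat f t) x) ≤ Real.exp (-(K * t)) := by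
  rw [Real.sqrt_le_left (Real.exp_pos _).le, ← Real.exp_nat_mul]
  convert gamma_heat_le hCD f hf ht x using 1
  push_cast
  ring_nf

lemma abs_heat_sub_le {K : ℝ} (hK : 0 < K) (hCD : G.CD K) {f : V → ℝ}
    (hf : ∀ z, G.gamma f f z ≤ 1) {T : ℝ} (hT : 0 ≤ T) (z : V) :
    |G.heat f T z - f z| ≤ √(2 * G.deg z) / K := by
  set C := √(2 * G.deg z)
  have hB : ∀ s, HasDerivAt (fun s => C / K * (1 - Real.exp (-(K * s))))
      (C * Real.exp (-(K * s))) s := fun s => by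
    refine ((((hasDerivAt_id s).const_mul K).fun_neg.exp).const_sub 1).const_mul (C / K)
      |>.congr_deriv ?_
    field_simp
    rfl
  have hdrift := image_norm_le_of_norm_deriv_right_le_deriv_boundary
    (f := fun s => G.heat f s z - f z) (a := 0) (b := T)
    (fun s _ => ((G.hasDerivAt_heat f s z).sub_const (f z)).continuousAt.continuousWithinAt)
    (fun s _ => ((G.hasDerivAt_heat f s z).sub_const (f z)).hasDerivWithinAt)
    (by simp [heat_zero]) hB
    (fun s hs => (G.abs_lap_le _ z).trans
      (mul_le_mul_of_nonneg_left (sqrt_gamma_heat_le hCD hf hs.1 z) (Real.sqrt_nonneg _)))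
    (Set.right_mem_Icc.2 hT)
  have hC : 0 ≤ C / K := div_nonneg (Real.sqrt_nonneg _) hK.le
  calc |G.heat f T z - f z| ≤ C / K * (1 - Real.exp (-(K * T))) := hdrift
    _ ≤ C / K := mul_le_of_le_one_right hC (by linarith [Real.exp_pos (-(K * T))])

theorem sub_le_of_gamma_le_one (hconn : G.Connected) {K : ℝ} (hK : 0 < K) (hCD : G.CD K)
    {f : V → ℝ} (hf : ∀ z, G.gamma f f z ≤ 1) (x y : V) :
    f y - f x ≤ (√(2 * G.deg x) + √(2 * G.deg y)) / K := by
  obtain ⟨L, hL⟩ := hconn.exists_sub_le_mul x y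
  have hbound : ∀ T ≥ 0,
      f y - f x ≤ (√(2 * G.deg x) + √(2 * G.deg y)) / K + L * Real.exp (-(K * T)) :=
    fun T hT => by
      have hx := abs_le.1 (abs_heat_sub_le hK hCD hf hT x)
      have hy := abs_le.1 (abs_heat_sub_le hK hCD hf hT y)
      have hflat := hL (G.heat f T) _ fun z => sqrt_gamma_heat_le hCD hf hT z
      rw [add_div]
      linarith [hx.2, hy.1]
  have hlim : Tendsto (fun T => (√(2 * G.deg x) + √(2 * G.deg y)) / K + L * Real.exp (-(K * T)))
      atTop (𝓝 ((√(2 * G.deg x) + √(2 * G.deg y)) / K + L * 0)) :=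
    ((Real.tendsto_exp_neg_atTop_nhds_zero.comp
      (tendsto_id.const_mul_atTop hK)).const_mul L).const_add _
  simpa using ge_of_tendsto hlim (eventually_atTop.2 ⟨0, hbound⟩)

end WGraph

theorem diamrho_le_of_CD_finite_general (G : WGraph V) [Fintype V]
    (hconn : G.Connected) (K : ℝ) (hK : 0 < K)
    (hCD : ∀ (f : V → ℝ) (x : V), K * G.gamma f f x ≤ G.gamma2 f x) :
    G.diamrho ≤ ENNReal.ofReal ((2 / K) * ⨆ x, Real.sqrt (2 * G.deg x)) := by
  have hbdd : BddAbove (Set.range fun z => √(2 * G.deg z)) := (Set.finite_range _).bddAbove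
  refine iSup₂_le fun x y => iSup₂_le fun f hf => ENNReal.ofReal_le_ofReal ?_
  calc f y - f x ≤ (√(2 * G.deg x) + √(2 * G.deg y)) / K :=
        WGraph.sub_le_of_gamma_le_one hconn hK hCD hf x y
    _ ≤ ((⨆ z, √(2 * G.deg z)) + ⨆ z, √(2 * G.deg z)) / K := by
        gcongr <;> exact le_ciSup hbdd _
    _ = (2 / K) * ⨆ z, √(2 * G.deg z) := by ring

/-- finite connected graph, CD(K,∞), K>0 ⟹ diam_ρ ≤ (2/K)·sup_x √(2 Deg x). -/
theorem diamrho_le_of_CD_finite (G : WGraph V) [Fintype V] [Nonempty V]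
    (hconn : G.Connected) (K : ℝ) (hK : 0 < K)
    (hCD : ∀ (f : V → ℝ) (x : V), K * G.gamma f f x ≤ G.gamma2 f x) :
    G.diamrho ≤ ENNReal.ofReal ((2 / K) * ⨆ x, Real.sqrt (2 * G.deg x)) :=
  diamrho_le_of_CD_finite_general G hconn K hK hCD
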